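/- Let A be an associative unital ℂ-algebra with the elements and relations described. Then for all s, t, p ∈ ℕ one has [J_s^⟨p⟩, X⁺_t] = Σ_{z=1}^{p} (−1)^{z+1}(z+1)·J_s^⟨p−z⟩·X_t^{+((z);s)}, and [J_s^⟨p⟩, X⁻_t] = −Σ_{z=1}^{p} (−1)^{z+1}(z+1)·X_t^{−((z);s)}·J_s^⟨p−z⟩. -/

import Mathlib

open Finset

/-- `X_t^{±((p);h)}`: for `p > 0`, `Σ_{w=0}^{p} C(p,w)·(−Q)^w·X_{t+p·h+w}`; for `p = 0`, `1`. -/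
noncomputable def Xbr {A : Type*} [Ring A] [Algebra ℂ A] (Q : ℂ) (X : ℕ → A) (t p h : ℕ) : A :=
  if p = 0 then 1
  else ∑ w ∈ Finset.range (p + 1), ((p.choose w : ℂ) * (-Q) ^ w) • X (t + p * h + w)

/-- `J_s^⟨p⟩`, defined recursively:
`J_s^⟨0⟩ = 1` and
`J_s^⟨p⟩ = (1/p)·Σ_{z=1}^{p} (−1)^{z−1}·(Σ_{w=0}^{z} C(z,w)·(−Q)^w·J_{z·s+w})·J_s^⟨p−z⟩`. -/
noncomputable def Jbr {A : Type*} [Ring A] [Algebra ℂ A] (Q : ℂ) (J : ℕ → A) (s : ℕ) : ℕ → A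
  | 0 => 1
  | p + 1 =>
      ((p : ℂ) + 1)⁻¹ •
        ∑ z ∈ Finset.range (p + 1),
          ((-1 : ℂ) ^ z) •
            ((∑ w ∈ Finset.range (z + 2),
                (((z + 1).choose w : ℂ) * (-Q) ^ w) • J ((z + 1) * s + w)) *
              Jbr Q J s (p - z))
  termination_by p => p
  decreasing_by omega

open Finset.Nat MulOpposite

/-! With `e = J^⟨·⟩` and `P z = Σ_w C(z+1,w) (-Q)^w J_{(z+1)s+w}`, the recursion defining `e` is
Newton's identity `(p+1) e_{p+1} = Σ_{z+j=p} (-1)^z P_z e_j`, so formally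
`E(u) = Σ e_p u^p = exp (Σ_z (-1)^z P_z u^{z+1}/(z+1))`. Write `Y_k = X_t^{((k);s)}` (with
`Y_0 = X_t`), and let `S` be the shift `Y_k ↦ Y_{k+1}`. Relation (L2) says that `ad P_z` acts on
the `Y_k` as `2 S^{z+1}`, whence `Y_k E(u) = E(u) ((1 + uS)^{-2} Y)_k`. Comparing coefficients of
`u^p`, this is `Y_k e_p = Σ_{z+j=p} (-1)^z (z+1) e_j Y_{k+z}`, which follows from Newton's identity
by strong induction on `p`. The relation for `X⁻` is the same statement in `Aᵐᵒᵖ`, where the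
commutativity of the `J`'s keeps Newton's identity intact. -/

namespace Finset.Nat

theorem sum_antidiagonal_antidiagonal_assoc {M : Type*} [AddCommMonoid M] (n : ℕ)
    (f : ℕ → ℕ → ℕ → M) :
    ∑ x ∈ antidiagonal n, ∑ y ∈ antidiagonal x.2, f x.1 y.1 y.2 =
      ∑ x ∈ antidiagonal n, ∑ y ∈ antidiagonal x.1, f y.1 y.2 x.2 := by
  simp only [Finset.sum_sigma']
  apply Finset.sum_nbij' (fun x ↦ ⟨(x.1.1 + x.2.1, x.2.2), (x.1.1, x.2.1)⟩)
    (fun x ↦ ⟨(x.2.1, x.2.2 + x.1.2), (x.2.2, x.1.2)⟩) <;> aesop (add simp [add_assoc])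

theorem sum_antidiagonal_antidiagonal_left_comm {M : Type*} [AddCommMonoid M] (n : ℕ)
    (f : ℕ → ℕ → ℕ → M) :
    ∑ x ∈ antidiagonal n, ∑ y ∈ antidiagonal x.2, f x.1 y.1 y.2 =
      ∑ x ∈ antidiagonal n, ∑ y ∈ antidiagonal x.2, f y.1 x.1 y.2 := by
  simp only [Finset.sum_sigma']
  apply Finset.sum_nbij' (fun x ↦ ⟨(x.2.1, x.1.1 + x.2.2), (x.1.1, x.2.2)⟩)
    (fun x ↦ ⟨(x.2.1, x.1.1 + x.2.2), (x.1.1, x.2.2)⟩) <;> aesop (add simp [add_left_comm])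

end Finset.Nat

section AntidiagonalSums

variable {𝕜 M : Type*} [CommRing 𝕜]

theorem two_mul_sum_antidiagonal_neg_one_pow (m : ℕ) :
    2 * ∑ x ∈ antidiagonal m, (-1 : 𝕜) ^ x.1 * ((-1) ^ x.2 * (x.2 + 1)) =
      (-1) ^ m * ((m + 1) * (m + 2)) := by
  induction m with
  | zero => norm_num
  | succ m ih =>
    have hshift : ∑ x ∈ antidiagonal m, (-1 : 𝕜) ^ (x.1 + 1) * ((-1) ^ x.2 * (x.2 + 1)) =
        -∑ x ∈ antidiagonal m, (-1 : 𝕜) ^ x.1 * ((-1) ^ x.2 * (x.2 + 1)) := by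
      rw [← sum_neg_distrib]
      exact sum_congr rfl fun x _ => by ring
    rw [sum_antidiagonal_succ, hshift]
    push_cast
    linear_combination (-1 : 𝕜) * ih

variable [AddCommGroup M] [Module 𝕜 M]

/-- Splits the factor `p + 1` as `z + j` along the antidiagonal. -/
theorem smul_sum_antidiagonal_succ (c : ℕ → 𝕜) (T : ℕ × ℕ → M) (p : ℕ) :
    ((p : 𝕜) + 1) • ∑ x ∈ antidiagonal (p + 1), c x.1 • T x =
      ∑ x ∈ antidiagonal p, (c x.1 * (x.2 + 1)) • T (x.1, x.2 + 1) +
        ∑ x ∈ antidiagonal p, (c (x.1 + 1) * (x.1 + 1)) • T (x.1 + 1, x.2) := by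
  have hsplit : ∀ x ∈ antidiagonal (p + 1), ((p : 𝕜) + 1) • c x.1 • T x =
      (c x.1 * x.2) • T x + (c x.1 * x.1) • T x := fun x hx => by
    rw [smul_smul, ← add_smul, ← mul_add, ← Nat.cast_add, add_comm x.2, mem_antidiagonal.mp hx,
      mul_comm]
    push_cast
    rfl
  rw [smul_sum, sum_congr rfl hsplit, sum_add_distrib, sum_antidiagonal_succ',
    sum_antidiagonal_succ (f := fun x => (c x.1 * x.1) • T x)]
  simp

theorem sum_antidiagonal_smul_sum_antidiagonal (c d : ℕ → 𝕜) (G : ℕ → ℕ → M) (p : ℕ) :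
    ∑ x ∈ antidiagonal p, c x.1 • ∑ y ∈ antidiagonal x.2, d y.1 • G y.2 (x.1 + y.1) =
      ∑ x ∈ antidiagonal p, (∑ y ∈ antidiagonal x.1, c y.1 * d y.2) • G x.2 x.1 := by
  simp only [smul_sum, smul_smul, sum_smul]
  refine (sum_antidiagonal_antidiagonal_assoc p fun a b i => (c a * d b) • G i (a + b)).trans ?_
  exact sum_congr rfl fun x _ => sum_congr rfl fun y hy => by rw [mem_antidiagonal.mp hy]

end AntidiagonalSums

section NewtonStep

variable {𝕜 A : Type*} [CommRing 𝕜] [Ring A] [Algebra 𝕜 A] {e P Y : ℕ → A}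

theorem smul_mul_succ_eq_of_newton
    (he : ∀ p : ℕ, ((p : 𝕜) + 1) • e (p + 1) =
      ∑ x ∈ antidiagonal p, (-1 : 𝕜) ^ x.1 • (P x.1 * e x.2))
    (hPY : ∀ z k, P z * Y k - Y k * P z = (2 : 𝕜) • Y (k + z + 1)) (p k : ℕ) :
    ((p : 𝕜) + 1) • (Y k * e (p + 1)) =
      ∑ x ∈ antidiagonal p, (-1 : 𝕜) ^ x.1 • (P x.1 * (Y k * e x.2)) -
        (2 : 𝕜) • ∑ x ∈ antidiagonal p, (-1 : 𝕜) ^ x.1 • (Y (k + x.1 + 1) * e x.2) := by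
  have hYP : ∀ z, Y k * P z = P z * Y k - (2 : 𝕜) • Y (k + z + 1) := fun z => by
    rw [← hPY]; abel
  rw [← mul_smul_comm, he, mul_sum, smul_sum, ← sum_sub_distrib]
  refine sum_congr rfl fun x _ => ?_
  rw [mul_smul_comm, ← mul_assoc, hYP, sub_mul, smul_mul_assoc, smul_comm, smul_sub, mul_assoc]

theorem sum_antidiagonal_smul_mul_sum_antidiagonal_of_newton
    (he : ∀ p : ℕ, ((p : 𝕜) + 1) • e (p + 1) =
      ∑ x ∈ antidiagonal p, (-1 : 𝕜) ^ x.1 • (P x.1 * e x.2))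
    (f : ℕ → 𝕜) (W : ℕ → A) (p : ℕ) :
    ∑ x ∈ antidiagonal p,
        (-1 : 𝕜) ^ x.1 • (P x.1 * ∑ y ∈ antidiagonal x.2, f y.1 • (e y.2 * W y.1)) =
      ∑ x ∈ antidiagonal p, f x.1 • ((((x.2 : 𝕜) + 1) • e (x.2 + 1)) * W x.1) := by
  simp only [mul_sum, smul_sum, he, sum_mul]
  refine (sum_antidiagonal_antidiagonal_left_comm p
    fun z a i => (-1 : 𝕜) ^ z • (P z * f a • (e i * W a))).trans ?_
  refine sum_congr rfl fun x _ => sum_congr rfl fun y _ => ?_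
  rw [mul_smul_comm, smul_mul_assoc, smul_comm, mul_assoc]

end NewtonStep

section Newton

variable {𝕜 A : Type*} [Field 𝕜] [CharZero 𝕜] [Ring A] [Algebra 𝕜 A] {e P Y : ℕ → A}

theorem mul_eq_sum_antidiagonal_of_newton (he0 : e 0 = 1)
    (he : ∀ p : ℕ, ((p : 𝕜) + 1) • e (p + 1) =
      ∑ x ∈ antidiagonal p, (-1 : 𝕜) ^ x.1 • (P x.1 * e x.2))
    (hPY : ∀ z k, P z * Y k - Y k * P z = (2 : 𝕜) • Y (k + z + 1)) (p k : ℕ) :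
    Y k * e p = ∑ x ∈ antidiagonal p, ((-1 : 𝕜) ^ x.1 * (x.1 + 1)) • (e x.2 * Y (k + x.1)) := by
  induction p using Nat.strong_induction_on generalizing k with
  | _ p ih =>
  cases p with
  | zero => simp [he0]
  | succ p =>
  have ih' : ∀ x ∈ antidiagonal p, ∀ k, Y k * e x.2 = ∑ y ∈ antidiagonal x.2,
      ((-1 : 𝕜) ^ y.1 * (y.1 + 1)) • (e y.2 * Y (k + y.1)) :=
    fun x hx k => ih x.2 (antidiagonal.snd_lt hx) k
  refine smul_right_injective A (Nat.cast_add_one_ne_zero (R := 𝕜) p) ?_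
  calc ((p : 𝕜) + 1) • (Y k * e (p + 1))
      = ∑ x ∈ antidiagonal p, (-1 : 𝕜) ^ x.1 • (P x.1 * (Y k * e x.2)) -
          (2 : 𝕜) • ∑ x ∈ antidiagonal p, (-1 : 𝕜) ^ x.1 • (Y (k + x.1 + 1) * e x.2) :=
        smul_mul_succ_eq_of_newton he hPY p k
    _ = ∑ x ∈ antidiagonal p, (-1 : 𝕜) ^ x.1 • (P x.1 * ∑ y ∈ antidiagonal x.2,
            ((-1 : 𝕜) ^ y.1 * (y.1 + 1)) • (e y.2 * Y (k + y.1))) -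
          (2 : 𝕜) • ∑ x ∈ antidiagonal p, (-1 : 𝕜) ^ x.1 • ∑ y ∈ antidiagonal x.2,
            ((-1 : 𝕜) ^ y.1 * (y.1 + 1)) • (e y.2 * Y (k + (x.1 + y.1) + 1)) := by
        congr 1
        · exact sum_congr rfl fun x hx => by rw [ih' x hx]
        · refine congrArg _ (sum_congr rfl fun x hx => ?_)
          simp only [ih' x hx, add_right_comm _ 1, add_assoc]
    _ = ∑ x ∈ antidiagonal p, ((-1 : 𝕜) ^ x.1 * (x.1 + 1) * (x.2 + 1)) •
            (e (x.2 + 1) * Y (k + x.1)) +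
          ∑ x ∈ antidiagonal p, ((-1 : 𝕜) ^ (x.1 + 1) * (x.1 + 1 + 1) * (x.1 + 1)) •
            (e x.2 * Y (k + (x.1 + 1))) := by
        -- Newton's identity contracts the first sum; the second is the convolution
        -- `(1 + x)⁻¹ (1 + x)⁻² = (1 + x)⁻³`.
        rw [sum_antidiagonal_smul_mul_sum_antidiagonal_of_newton he
            (fun z => (-1 : 𝕜) ^ z * (z + 1)) (fun z => Y (k + z)),
          sum_antidiagonal_smul_sum_antidiagonal (fun z => (-1 : 𝕜) ^ z)
            (fun z => (-1 : 𝕜) ^ z * (z + 1)) (fun i m => e i * Y (k + m + 1)),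
          smul_sum, sub_eq_add_neg, ← sum_neg_distrib]
        congr 1 <;> refine sum_congr rfl fun x _ => ?_
        · rw [smul_mul_assoc, smul_smul]
        · rw [smul_smul, ← neg_smul, two_mul_sum_antidiagonal_neg_one_pow, ← add_assoc]
          congr 1
          ring
    _ = ((p : 𝕜) + 1) • ∑ x ∈ antidiagonal (p + 1),
          ((-1 : 𝕜) ^ x.1 * (x.1 + 1)) • (e x.2 * Y (k + x.1)) := by
        rw [smul_sum_antidiagonal_succ (fun z => (-1 : 𝕜) ^ z * (z + 1))
          (fun x => e x.2 * Y (k + x.1))]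
        push_cast
        rfl

theorem mul_sub_mul_eq_sum_of_newton (he0 : e 0 = 1)
    (he : ∀ p : ℕ, ((p : 𝕜) + 1) • e (p + 1) =
      ∑ x ∈ antidiagonal p, (-1 : 𝕜) ^ x.1 • (P x.1 * e x.2))
    (hPY : ∀ z k, P z * Y k - Y k * P z = (2 : 𝕜) • Y (k + z + 1)) (p : ℕ) :
    e p * Y 0 - Y 0 * e p =
      ∑ z ∈ range p, ((-1 : 𝕜) ^ (z + 2) * ((z : 𝕜) + 2)) • (e (p - (z + 1)) * Y (z + 1)) := by
  rw [mul_eq_sum_antidiagonal_of_newton he0 he hPY]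
  cases p with
  | zero => simp [he0]
  | succ n =>
    rw [sum_antidiagonal_succ, sum_antidiagonal_eq_sum_range_succ_mk, Nat.succ_eq_add_one]
    simp only [pow_zero, Nat.cast_zero, zero_add, mul_one, one_smul, sub_add_cancel_left,
      ← sum_neg_distrib, ← neg_smul, Nat.add_sub_add_right]
    refine sum_congr rfl fun z _ => ?_
    congr 1
    push_cast
    ring

/-- Newton's identity survives the passage to `Aᵐᵒᵖ` because the `P z` commute with the `e j`. -/
theorem mul_sub_mul_eq_neg_sum_of_newton (he0 : e 0 = 1)
    (he : ∀ p : ℕ, ((p : 𝕜) + 1) • e (p + 1) =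
      ∑ x ∈ antidiagonal p, (-1 : 𝕜) ^ x.1 • (P x.1 * e x.2))
    (hPe : ∀ z j, Commute (P z) (e j))
    (hPY : ∀ z k, P z * Y k - Y k * P z = (-2 : 𝕜) • Y (k + z + 1)) (p : ℕ) :
    e p * Y 0 - Y 0 * e p =
      -∑ z ∈ range p, ((-1 : 𝕜) ^ (z + 2) * ((z : 𝕜) + 2)) • (Y (z + 1) * e (p - (z + 1))) := by
  have he_op : ∀ p : ℕ, ((p : 𝕜) + 1) • op (e (p + 1)) =
      ∑ x ∈ antidiagonal p, (-1 : 𝕜) ^ x.1 • (op (P x.1) * op (e x.2)) := fun p => by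
    simp only [← op_mul, ← (hPe _ _).eq, ← op_smul, ← op_sum, he]
  have hPY_op : ∀ z k, op (P z) * op (Y k) - op (Y k) * op (P z) =
      (2 : 𝕜) • op (Y (k + z + 1)) := fun z k => by
    rw [← op_mul, ← op_mul, ← op_sub, ← neg_sub, hPY, ← op_smul, neg_smul, neg_neg]
  have h := congrArg unop (mul_sub_mul_eq_sum_of_newton (e := fun n => op (e n))
    (P := fun n => op (P n)) (Y := fun n => op (Y n)) (by simp [he0]) he_op hPY_op p)
  simp only [unop_sub, unop_mul, unop_op, unop_sum, unop_smul] at h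
  rw [← h, neg_sub]

end Newton

section ShiftDiff

variable {𝕜 V : Type*} [CommRing 𝕜] [AddCommGroup V] [Module 𝕜 V]

def seqShift : Module.End 𝕜 (ℕ → V) := LinearMap.funLeft 𝕜 V (· + 1)

theorem seqShift_apply (X : ℕ → V) (t : ℕ) : (seqShift : Module.End 𝕜 (ℕ → V)) X t = X (t + 1) :=
  rfl

theorem seqShift_pow_apply (n : ℕ) (X : ℕ → V) (t : ℕ) :
    ((seqShift : Module.End 𝕜 (ℕ → V)) ^ n) X t = X (t + n) := by
  induction n generalizing t with
  | zero => rfl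
  | succ n ih => rw [pow_succ', Module.End.mul_apply, seqShift_apply, ih, add_right_comm, add_assoc]

/-- `(shiftDiff Q s X) t = X (t + s) - Q • X (t + s + 1)`; its `p`-th power evaluated at `t` is the
paper's `X_t^{((p);s)}` for `p > 0`. -/
def shiftDiff (Q : 𝕜) (s : ℕ) : Module.End 𝕜 (ℕ → V) := seqShift ^ s * (1 - Q • seqShift)

theorem shiftDiff_pow_apply (Q : 𝕜) (s p : ℕ) (X : ℕ → V) (t : ℕ) :
    (shiftDiff Q s ^ p) X t =
      ∑ w ∈ range (p + 1), ((p.choose w : 𝕜) * (-Q) ^ w) • X (t + p * s + w) := by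
  have hcomm : Commute ((seqShift : Module.End 𝕜 (ℕ → V)) ^ s) (1 - Q • seqShift) :=
    ((Commute.one_right _).sub_right ((Commute.refl _).smul_right Q)).pow_left s
  have hbinom : (1 - Q • seqShift : Module.End 𝕜 (ℕ → V)) ^ p =
      ∑ w ∈ range (p + 1), ((p.choose w : 𝕜) * (-Q) ^ w) • seqShift ^ w := by
    rw [sub_eq_add_neg, add_comm, ← neg_smul Q (seqShift : Module.End 𝕜 (ℕ → V)),
      (Commute.one_right _).add_pow]
    refine sum_congr rfl fun w _ => ?_
    rw [one_pow, mul_one, ← nsmul_eq_mul', ← Nat.cast_smul_eq_nsmul 𝕜, smul_pow, smul_smul]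
  rw [shiftDiff, hcomm.mul_pow, ← pow_mul, hbinom, Finset.mul_sum]
  simp only [LinearMap.sum_apply, Finset.sum_apply, Module.End.mul_apply, mul_smul_comm,
    LinearMap.smul_apply, Pi.smul_apply, seqShift_pow_apply]
  refine sum_congr rfl fun w _ => ?_
  rw [mul_comm s p, add_right_comm]

end ShiftDiff

section Relations

variable {𝕜 A : Type*} [CommRing 𝕜] [Ring A] [Algebra 𝕜 A] {c : 𝕜} {J X : ℕ → A}

theorem commutator_sum_smul {ι : Type*} (h : ∀ r t, J r * X t - X t * J r = c • X (r + t))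
    (S : Finset ι) (a : ι → 𝕜) (i : ι → ℕ) (r : ℕ) :
    J r * ∑ w ∈ S, a w • X (i w) - (∑ w ∈ S, a w • X (i w)) * J r =
      c • ∑ w ∈ S, a w • X (r + i w) := by
  simp only [mul_sum, sum_mul, ← sum_sub_distrib, smul_sum, mul_smul_comm, smul_mul_assoc,
    ← smul_sub, h, smul_comm c]

theorem sum_smul_commutator {ι : Type*} (h : ∀ r t, J r * X t - X t * J r = c • X (r + t))
    (S : Finset ι) (a : ι → 𝕜) (i : ι → ℕ) (t : ℕ) :
    (∑ w ∈ S, a w • J (i w)) * X t - X t * ∑ w ∈ S, a w • J (i w) =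
      c • ∑ w ∈ S, a w • X (i w + t) := by
  simp only [mul_sum, sum_mul, ← sum_sub_distrib, smul_sum, mul_smul_comm, smul_mul_assoc,
    ← smul_sub, h, smul_comm c]

theorem commutator_shiftDiff_pow_apply (h : ∀ r t, J r * X t - X t * J r = c • X (r + t))
    (Q : 𝕜) (s k r t : ℕ) :
    J r * (shiftDiff Q s ^ k) X t - (shiftDiff Q s ^ k) X t * J r =
      c • (shiftDiff Q s ^ k) X (r + t) := by
  simp only [shiftDiff_pow_apply, commutator_sum_smul h, add_assoc]

theorem shiftDiff_pow_apply_zero_commutator (h : ∀ r t, J r * X t - X t * J r = c • X (r + t))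
    (Q : 𝕜) (s n k t : ℕ) :
    (shiftDiff Q s ^ n) J 0 * (shiftDiff Q s ^ k) X t -
        (shiftDiff Q s ^ k) X t * (shiftDiff Q s ^ n) J 0 =
      c • (shiftDiff Q s ^ (k + n)) X t := by
  rw [shiftDiff_pow_apply _ _ _ J, sum_smul_commutator (commutator_shiftDiff_pow_apply h Q s k),
    add_comm k, pow_add, Module.End.mul_apply, shiftDiff_pow_apply _ _ _ ((shiftDiff Q s ^ k) X)]
  simp only [zero_add, add_comm _ t, add_assoc]

theorem shiftDiff_pow_apply_mem_adjoin (Q : 𝕜) (s n t : ℕ) :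
    (shiftDiff Q s ^ n) J t ∈ Algebra.adjoin 𝕜 (Set.range J) := by
  rw [shiftDiff_pow_apply]
  exact Subalgebra.sum_mem _ fun w _ =>
    Subalgebra.smul_mem _ (Algebra.subset_adjoin (Set.mem_range_self _)) _

end Relations

section Brackets

variable {A : Type*} [Ring A] [Algebra ℂ A] (Q : ℂ) (J : ℕ → A) (s : ℕ)

theorem Xbr_eq_shiftDiff_pow_apply (X : ℕ → A) (t : ℕ) {p : ℕ} (hp : p ≠ 0) :
    Xbr Q X t p s = (shiftDiff Q s ^ p) X t := by
  rw [Xbr, if_neg hp, shiftDiff_pow_apply]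

theorem Jbr_zero : Jbr Q J s 0 = 1 := by
  rw [Jbr]

theorem Jbr_newton (p : ℕ) :
    ((p : ℂ) + 1) • Jbr Q J s (p + 1) =
      ∑ x ∈ antidiagonal p, (-1 : ℂ) ^ x.1 • ((shiftDiff Q s ^ (x.1 + 1)) J 0 * Jbr Q J s x.2) := by
  rw [Jbr, smul_smul, mul_inv_cancel₀ (Nat.cast_add_one_ne_zero p), one_smul,
    sum_antidiagonal_eq_sum_range_succ_mk]
  simp only [shiftDiff_pow_apply, zero_add]

theorem Jbr_mem_adjoin (p : ℕ) : Jbr Q J s p ∈ Algebra.adjoin ℂ (Set.range J) := by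
  induction p using Nat.strong_induction_on with
  | _ p ih =>
  cases p with
  | zero => exact (Jbr_zero Q J s).symm ▸ Subalgebra.one_mem _
  | succ p =>
    rw [Jbr]
    refine Subalgebra.smul_mem _ (Subalgebra.sum_mem _ fun z _ => Subalgebra.smul_mem _
      (Subalgebra.mul_mem _ ?_ (ih _ (by omega))) _) _
    simpa only [shiftDiff_pow_apply, zero_add] using shiftDiff_pow_apply_mem_adjoin Q s (z + 1) 0

end Brackets

theorem stmt0 {A : Type*} [Ring A] [Algebra ℂ A] (Q : ℂ) (Xp Xm J : ℕ → A)
    (hL1 : ∀ s t, J s * J t = J t * J s)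
    (hL2p : ∀ s t, J s * Xp t - Xp t * J s = (2 : ℂ) • Xp (s + t))
    (hL2m : ∀ s t, J s * Xm t - Xm t * J s = -((2 : ℂ) • Xm (s + t)))
    (s t p : ℕ) :
    (Jbr Q J s p * Xp t - Xp t * Jbr Q J s p =
      ∑ z ∈ Finset.range p,
        ((-1 : ℂ) ^ (z + 2) * ((z : ℂ) + 2)) •
          (Jbr Q J s (p - (z + 1)) * Xbr Q Xp t (z + 1) s)) ∧
    (Jbr Q J s p * Xm t - Xm t * Jbr Q J s p =
      -∑ z ∈ Finset.range p,
        ((-1 : ℂ) ^ (z + 2) * ((z : ℂ) + 2)) •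
          (Xbr Q Xm t (z + 1) s * Jbr Q J s (p - (z + 1)))) := by
  have hcomm : IsMulCommutative (Algebra.adjoin ℂ (Set.range J)) :=
    Algebra.isMulCommutative_adjoin ℂ (by rintro _ ⟨a, rfl⟩ _ ⟨b, rfl⟩; exact hL1 a b)
  have hPe : ∀ z j, Commute ((shiftDiff Q s ^ (z + 1)) J 0) (Jbr Q J s j) := fun z j =>
    setLike_mul_comm (shiftDiff_pow_apply_mem_adjoin Q s (z + 1) 0) (Jbr_mem_adjoin Q J s j)
  have hL2m' : ∀ r t, J r * Xm t - Xm t * J r = (-2 : ℂ) • Xm (r + t) := fun r t => by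
    rw [hL2m, neg_smul]
  have hXbr : ∀ (X : ℕ → A) z, Xbr Q X t (z + 1) s = (shiftDiff Q s ^ (z + 1)) X t :=
    fun X z => Xbr_eq_shiftDiff_pow_apply Q s X t z.succ_ne_zero
  simp only [hXbr]
  exact ⟨mul_sub_mul_eq_sum_of_newton (Y := fun k => (shiftDiff Q s ^ k) Xp t) (Jbr_zero Q J s)
      (Jbr_newton Q J s) (fun z k => shiftDiff_pow_apply_zero_commutator hL2p Q s (z + 1) k t) p,
    mul_sub_mul_eq_neg_sum_of_newton (Y := fun k => (shiftDiff Q s ^ k) Xm t) (Jbr_zero Q J s)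
      (Jbr_newton Q J s) hPe
      (fun z k => shiftDiff_pow_apply_zero_commutator hL2m' Q s (z + 1) k t) p⟩
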